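/- If r is not a prime power (r ≥ 2), then the greatest common divisor of the binomial coefficients C(r,1), C(r,2), ..., C(r,r-1) is 1. -/

import Mathlib

theorem stmt_0 (r : ℕ) (hr : 2 ≤ r) (h : ¬ IsPrimePow r) :
    Finset.gcd (Finset.Icc 1 (r - 1)) (fun k => r.choose k) = 1 :=
  Choose.gcd_choose_eq_one_of_not_isPrimePow hr h
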